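/- arXiv:physics/9908064 — 2 statements merged into one kernel-verified Lean document; each statement's English description precedes it below -/
import Mathlib

section
/- Let Ω ⊂ ℝ³ be bounded and star-shaped about the origin, containing the closed ball of radius R_min about the origin, and contained in the ball of radius R_max. Let v : Ω → ℝ be C¹ with |v| ≤ c on the ball of radius R_min. Then ‖v‖_{L²(Ω)} ≤ [ (R_max - R_min)(R_max³ - R_min³) / (3 R_max R_min) ]^{1/2} ‖∇v‖_{L²(Ω)} + ‖c‖_{L²(Ω)}, where ‖c‖_{L²(Ω)} = c·|Ω|^{1/2}. -/
/-!
Write a point of `Ω` outside the ball of radius `Rmin` as `x = R • ω` with `‖ω‖ = 1`.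
Star-shapedness puts the segment `[Rmin, R] • ω` inside `Ω`, so the fundamental theorem of
calculus along it and Cauchy–Schwarz against the weight `s²` give
`|v x| ≤ c + (Rmin⁻¹ - Rmax⁻¹) ^ (1/2) * (∫_{Rmin}^{R} s² |∇v (s • ω)|² ds) ^ (1/2)`.
The last integral is at most the polar-coordinate integral of `|∇v|²` along the whole ray through
`x`, which depends only on the direction of `x`. Integrating it over the shell
`Rmin ≤ ‖x‖ ≤ Rmax` in polar coordinates therefore yields `(Rmax³ - Rmin³) / 3 * ∫_Ω |∇v|²`,
and Minkowski's inequality in `L²(Ω)` finishes the proof.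
-/

open MeasureTheory Set Metric
open scoped ENNReal

local notation "dim" => Module.finrank ℝ

theorem eLpNorm_two_eq_rpow_lintegral {α ε : Type*} [MeasurableSpace α] [ENorm ε]
    (μ : Measure α) (f : α → ε) :
    eLpNorm f 2 μ = (∫⁻ x, ‖f x‖ₑ ^ (2 : ℝ) ∂μ) ^ (1 / 2 : ℝ) := by
  simpa using eLpNorm_nnreal_eq_lintegral (f := f) (μ := μ) (p := 2) two_ne_zero

theorem sqrt_integral_norm_sq_eq_toReal_eLpNorm {α F : Type*} [MeasurableSpace α] {μ : Measure α}
    [NormedAddCommGroup F] {f : α → F} (hf : AEStronglyMeasurable f μ) :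
    √(∫ x, ‖f x‖ ^ 2 ∂μ) = (eLpNorm f 2 μ).toReal := by
  rw [toReal_eLpNorm hf, lpNorm_eq_integral_norm_rpow_toReal two_ne_zero ENNReal.ofNat_ne_top hf]
  norm_num [Real.sqrt_eq_rpow]

theorem eLpNorm_restrict_ne_top_of_isBounded {α F : Type*} [MetricSpace α] [ProperSpace α]
    [MeasurableSpace α] [OpensMeasurableSpace α] (μ : Measure α) [IsFiniteMeasureOnCompacts μ]
    [NormedAddCommGroup F] {f : α → F} (hf : Continuous f) {s : Set α}
    (hs : Bornology.IsBounded s) (p : ℝ≥0∞) : eLpNorm f p (μ.restrict s) ≠ ∞ := by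
  obtain ⟨C, hC⟩ := hs.isCompact_closure.exists_bound_of_continuousOn hf.continuousOn
  have hfC : ∀ᵐ x ∂μ.restrict s, ‖f x‖ ≤ C := ae_restrict_of_ae_restrict_of_subset subset_closure
    (ae_restrict_of_forall_mem isClosed_closure.measurableSet hC)
  refine ((eLpNorm_le_of_ae_bound hfC).trans_lt ?_).ne
  rw [Measure.restrict_apply_univ]
  exact ENNReal.mul_lt_top (ENNReal.rpow_lt_top_of_nonneg (by positivity) hs.measure_lt_top.ne)
    ENNReal.ofReal_lt_top

theorem lintegral_le_rpow_lintegral_inv_mul_rpow_lintegral_mul_sq {α : Type*} [MeasurableSpace α]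
    {μ : Measure α} {w h : α → ℝ≥0∞} (hw : AEMeasurable w μ) (hh : AEMeasurable h μ)
    (hw0 : ∀ᵐ x ∂μ, w x ≠ 0) (hw_top : ∀ᵐ x ∂μ, w x ≠ ∞) :
    ∫⁻ x, h x ∂μ ≤
      (∫⁻ x, (w x)⁻¹ ∂μ) ^ (1 / 2 : ℝ) * (∫⁻ x, w x * h x ^ (2 : ℝ) ∂μ) ^ (1 / 2 : ℝ) := by
  have hsplit : ∀ᵐ x ∂μ, h x = (w x ^ (-1 / 2 : ℝ) * (w x ^ (1 / 2 : ℝ) * h x)) := by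
    filter_upwards [hw0, hw_top] with x hx0 hx_top
    rw [← mul_assoc, ← ENNReal.rpow_add _ _ hx0 hx_top]
    norm_num
  have hsq (z : ℝ≥0∞) : (z ^ (1 / 2 : ℝ)) ^ (2 : ℝ) = z := by
    rw [← ENNReal.rpow_mul]; norm_num
  have hsq_inv (z : ℝ≥0∞) : (z ^ (-1 / 2 : ℝ)) ^ (2 : ℝ) = z⁻¹ := by
    rw [← ENNReal.rpow_mul]; norm_num [ENNReal.rpow_neg_one]
  calc ∫⁻ x, h x ∂μ
      = ∫⁻ x, (fun x ↦ w x ^ (-1 / 2 : ℝ)) x * (fun x ↦ w x ^ (1 / 2 : ℝ) * h x) x ∂μ :=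
        lintegral_congr_ae hsplit
    _ ≤ _ := ENNReal.lintegral_mul_le_Lp_mul_Lq μ Real.HolderConjugate.two_two
          (hw.pow_const _) ((hw.pow_const _).mul hh)
    _ = _ := by
        simp only [hsq_inv, ENNReal.mul_rpow_of_nonneg _ _ zero_le_two, hsq]

section Polar

variable {E : Type*} [NormedAddCommGroup E] [NormedSpace ℝ E]

/-- `r ^ (dim E - 1) dr` is the radial factor of a Haar measure in polar coordinates. -/
noncomputable def rayLIntegral (f : E → ℝ≥0∞) (x : E) : ℝ≥0∞ :=
  ∫⁻ r in Ioi (0 : ℝ), ENNReal.ofReal (r ^ (dim E - 1)) * f (r • ‖x‖⁻¹ • x)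

theorem rayLIntegral_smul (f : E → ℝ≥0∞) {r : ℝ} (hr : 0 < r) (x : E) :
    rayLIntegral f (r • x) = rayLIntegral f x := by
  have hscalar : (r * ‖x‖)⁻¹ * r = ‖x‖⁻¹ := by
    rw [mul_inv, mul_right_comm, inv_mul_cancel₀ hr.ne', one_mul]
  simp only [rayLIntegral, norm_smul, Real.norm_of_nonneg hr.le, smul_smul, hscalar]

theorem rayLIntegral_of_norm_eq_one (f : E → ℝ≥0∞) {x : E} (hx : ‖x‖ = 1) :
    rayLIntegral f x = ∫⁻ r in Ioi (0 : ℝ), ENNReal.ofReal (r ^ (dim E - 1)) * f (r • x) := by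
  simp [rayLIntegral, hx]

variable [MeasurableSpace E] [BorelSpace E]

theorem measurable_rayLIntegral {f : E → ℝ≥0∞} (hf : Measurable f) :
    Measurable (rayLIntegral f) :=
  Measurable.lintegral_prod_right (f := fun x r ↦
    ENNReal.ofReal (r ^ (dim E - 1)) * f (r • ‖x‖⁻¹ • x)) (by fun_prop)

variable [FiniteDimensional ℝ E] [Nontrivial E] (μ : Measure E) [μ.IsAddHaarMeasure]

theorem lintegral_eq_lintegral_toSphere_Ioi {f : E → ℝ≥0∞} (hf : Measurable f) :
    ∫⁻ x, f x ∂μ = ∫⁻ ω, (∫⁻ r in Ioi (0 : ℝ),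
      ENNReal.ofReal (r ^ (dim E - 1)) * f (r • (ω : E))) ∂μ.toSphere := by
  have hg : Measurable fun p : sphere (0 : E) 1 × Ioi (0 : ℝ) ↦ f (p.2.1 • (p.1 : E)) := by
    fun_prop
  calc ∫⁻ x, f x ∂μ = ∫⁻ x : ({(0 : E)}ᶜ : Set E), f x ∂μ.comap (↑) := by
        rw [lintegral_subtype_comap (measurableSet_singleton _).compl, restrict_compl_singleton]
    _ = ∫⁻ p, f (p.2.1 • (p.1 : E)) ∂μ.toSphere.prod (.volumeIoiPow (dim E - 1)) := by
        rw [← (μ.measurePreserving_homeomorphUnitSphereProd).lintegral_comp_emb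
          (Homeomorph.measurableEmbedding _)]
        refine lintegral_congr fun x ↦ ?_
        simp [smul_inv_smul₀ (norm_ne_zero_iff.2 x.2)]
    _ = _ := by
        rw [lintegral_prod _ hg.aemeasurable]
        refine lintegral_congr fun ω ↦ ?_
        rw [Measure.volumeIoiPow, lintegral_withDensity_eq_lintegral_mul _ (by fun_prop)
          (by fun_prop), ← lintegral_subtype_comap measurableSet_Ioi]
        rfl

theorem lintegral_toSphere_rayLIntegral {f : E → ℝ≥0∞} (hf : Measurable f) :
    ∫⁻ ω, rayLIntegral f ω ∂μ.toSphere = ∫⁻ x, f x ∂μ := by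
  rw [lintegral_eq_lintegral_toSphere_Ioi μ hf]
  exact lintegral_congr fun ω ↦ rayLIntegral_of_norm_eq_one f (norm_eq_of_mem_sphere ω)

theorem setLIntegral_norm_preimage_rayLIntegral {f : E → ℝ≥0∞} (hf : Measurable f) {s : Set ℝ}
    (hs : MeasurableSet s) (hs0 : s ⊆ Ioi 0) :
    ∫⁻ x in norm ⁻¹' s, rayLIntegral f x ∂μ =
      (∫⁻ r in s, ENNReal.ofReal (r ^ (dim E - 1))) * ∫⁻ x, f x ∂μ := by
  have hray := measurable_rayLIntegral hf
  have hray_sphere : Measurable fun ω : sphere (0 : E) 1 ↦ rayLIntegral f ω :=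
    hray.comp measurable_subtype_coe
  rw [← lintegral_indicator (measurable_norm hs),
    lintegral_eq_lintegral_toSphere_Ioi μ (hray.indicator (measurable_norm hs)),
    ← lintegral_toSphere_rayLIntegral μ hf, ← lintegral_const_mul _ hray_sphere]
  refine lintegral_congr fun ω ↦ ?_
  have hω : ‖(ω : E)‖ = 1 := norm_eq_of_mem_sphere ω
  calc _ = ∫⁻ r in Ioi 0, s.indicator
          (fun r ↦ ENNReal.ofReal (r ^ (dim E - 1)) * rayLIntegral f ω) r := by
        refine setLIntegral_congr_fun measurableSet_Ioi fun r (hr : 0 < r) ↦ ?_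
        have hnorm : ‖r • (ω : E)‖ = r := by rw [norm_smul, hω, mul_one, Real.norm_of_nonneg hr.le]
        by_cases hrs : r ∈ s
        · simp [hrs, hnorm, rayLIntegral_smul f hr]
        · simp [hrs, hnorm]
    _ = _ := by
        rw [lintegral_indicator hs, Measure.restrict_restrict hs, inter_eq_left.2 hs0,
          lintegral_mul_const _ (by fun_prop)]

theorem eLpNorm_rpow_mul_indicator_rayLIntegral (Λ : ℝ≥0∞) {f : E → ℝ≥0∞} (hf : Measurable f)
    {s : Set ℝ} (hs : MeasurableSet s) (hs0 : s ⊆ Ioi 0) :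
    eLpNorm (fun x ↦ (Λ * (norm ⁻¹' s).indicator (rayLIntegral f) x) ^ (1 / 2 : ℝ)) 2 μ =
      (Λ * ∫⁻ r in s, ENNReal.ofReal (r ^ (dim E - 1))) ^ (1 / 2 : ℝ) *
        (∫⁻ x, f x ∂μ) ^ (1 / 2 : ℝ) := by
  rw [eLpNorm_two_eq_rpow_lintegral, ← ENNReal.mul_rpow_of_nonneg _ _ (by norm_num), mul_assoc,
    ← setLIntegral_norm_preimage_rayLIntegral μ hf hs hs0,
    ← lintegral_indicator (measurable_norm hs),
    ← lintegral_const_mul _ ((measurable_rayLIntegral hf).indicator (measurable_norm hs))]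
  congr 1
  refine lintegral_congr fun x ↦ ?_
  rw [enorm_eq_self, ← ENNReal.rpow_mul]
  norm_num

end Polar

section Ray

variable {E F : Type*} [NormedAddCommGroup E] [NormedSpace ℝ E]
  [NormedAddCommGroup F] [NormedSpace ℝ F] [CompleteSpace F]

theorem enorm_sub_le_setLIntegral_enorm_fderiv {v : E → F} (hv : ContDiff ℝ 1 v) {ω : E}
    (hω : ‖ω‖ ≤ 1) {a b : ℝ} (hab : a ≤ b) :
    ‖v (b • ω) - v (a • ω)‖ₑ ≤ ∫⁻ s in Ioc a b, ‖fderiv ℝ v (s • ω)‖ₑ := by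
  have hderiv (s : ℝ) : HasDerivAt (fun s : ℝ ↦ v (s • ω)) (fderiv ℝ v (s • ω) ω) s := by
    simpa [Function.comp_def] using
      ((hv.differentiable one_ne_zero) _).hasFDerivAt.comp_hasDerivAt s
        ((hasDerivAt_id s).smul_const ω)
  have hcont : Continuous fun s : ℝ ↦ fderiv ℝ v (s • ω) ω := by
    have := hv.continuous_fderiv one_ne_zero
    fun_prop
  rw [← intervalIntegral.integral_eq_sub_of_hasDerivAt (fun s _ ↦ hderiv s)
    (hcont.intervalIntegrable _ _), intervalIntegral.integral_of_le hab]
  refine (enorm_integral_le_lintegral_enorm _).trans (lintegral_mono fun s ↦ ?_)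
  calc ‖fderiv ℝ v (s • ω) ω‖ₑ ≤ ‖fderiv ℝ v (s • ω)‖ₑ * 1 :=
        (fderiv ℝ v (s • ω)).le_opENorm_of_le (by simpa [← ofReal_norm] using hω)
    _ = _ := mul_one _

theorem enorm_sub_le_of_weighted_ray (n : ℕ) {v : E → F} (hv : ContDiff ℝ 1 v) {ω : E}
    (hω : ‖ω‖ ≤ 1) {a b : ℝ} (ha : 0 ≤ a) (hab : a ≤ b) :
    ‖v (b • ω) - v (a • ω)‖ₑ ≤
      (∫⁻ s in Ioc a b, (ENNReal.ofReal (s ^ n))⁻¹) ^ (1 / 2 : ℝ) *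
        (∫⁻ s in Ioc a b, ENNReal.ofReal (s ^ n) * ‖fderiv ℝ v (s • ω)‖ₑ ^ (2 : ℝ)) ^
          (1 / 2 : ℝ) := by
  have hcont : Continuous fun s : ℝ ↦ ‖fderiv ℝ v (s • ω)‖ₑ := by
    have := hv.continuous_fderiv one_ne_zero
    fun_prop
  refine (enorm_sub_le_setLIntegral_enorm_fderiv hv hω hab).trans
    (lintegral_le_rpow_lintegral_inv_mul_rpow_lintegral_mul_sq (by fun_prop) hcont.aemeasurable
      ?_ (ae_of_all _ fun _ ↦ ENNReal.ofReal_ne_top))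
  filter_upwards [ae_restrict_mem measurableSet_Ioc] with s hs
  exact (ENNReal.ofReal_pos.2 (pow_pos (ha.trans_lt hs.1) n)).ne'

theorem setLIntegral_Ioc_le_rayLIntegral_indicator {Ω T : Set E} (hΩ : StarConvex ℝ 0 Ω)
    (hΩT : Ω ⊆ T) {x : E} (hx : x ∈ Ω) {a : ℝ} (ha : 0 ≤ a) (f : E → ℝ≥0∞) :
    ∫⁻ s in Ioc a ‖x‖, ENNReal.ofReal (s ^ (dim E - 1)) * f (s • ‖x‖⁻¹ • x) ≤
      rayLIntegral (T.indicator f) x := by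
  calc _ = ∫⁻ s in Ioc a ‖x‖,
        ENNReal.ofReal (s ^ (dim E - 1)) * T.indicator f (s • ‖x‖⁻¹ • x) := by
        refine setLIntegral_congr_fun measurableSet_Ioc fun s hs ↦ ?_
        have hx0 : 0 < ‖x‖ := (ha.trans_lt hs.1).trans_le hs.2
        have hmem : s • ‖x‖⁻¹ • x ∈ Ω := by
          rw [smul_smul, ← div_eq_mul_inv]
          exact hΩ.smul_mem hx (div_nonneg (ha.trans hs.1.le) hx0.le)
            (div_le_one_of_le₀ hs.2 hx0.le)
        rw [indicator_of_mem (hΩT hmem)]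
    _ ≤ _ := lintegral_mono_set fun s hs ↦ ha.trans_lt hs.1

theorem enorm_le_of_starConvex {Ω T : Set E} (hΩ : StarConvex ℝ 0 Ω) (hΩT : Ω ⊆ T) {a b : ℝ}
    (ha : 0 < a) (hΩb : Ω ⊆ closedBall 0 b) {v : E → F} (hv : ContDiff ℝ 1 v) {c : ℝ}
    (hc : ∀ x ∈ closedBall (0 : E) a, ‖v x‖ ≤ c) {x : E} (hx : x ∈ Ω) :
    ‖v x‖ₑ ≤ ‖c‖ₑ + ((∫⁻ s in Ioc a b, (ENNReal.ofReal (s ^ (dim E - 1)))⁻¹) *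
      (norm ⁻¹' Icc a b).indicator
        (rayLIntegral (T.indicator fun y ↦ ‖fderiv ℝ v y‖ₑ ^ (2 : ℝ))) x) ^ (1 / 2 : ℝ) := by
  have hvc : ∀ y ∈ closedBall (0 : E) a, ‖v y‖ₑ ≤ ‖c‖ₑ := fun y hy ↦
    enorm_le_iff_norm_le.2 ((hc y hy).trans (Real.le_norm_self c))
  rcases le_or_gt ‖x‖ a with hxa | hax
  · exact (hvc x (mem_closedBall_zero_iff.2 hxa)).trans le_self_add
  have hx0 : x ≠ 0 := norm_pos_iff.1 (ha.trans hax)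
  set ω := ‖x‖⁻¹ • x
  have hω : ‖ω‖ = 1 := norm_smul_inv_norm hx0
  have hxb : ‖x‖ ≤ b := mem_closedBall_zero_iff.1 (hΩb hx)
  rw [indicator_of_mem (show x ∈ norm ⁻¹' Icc a b from ⟨hax.le, hxb⟩),
    ENNReal.mul_rpow_of_nonneg _ _ (by norm_num : (0 : ℝ) ≤ 1 / 2)]
  calc ‖v x‖ₑ ≤ ‖v (a • ω)‖ₑ + ‖v (‖x‖ • ω) - v (a • ω)‖ₑ := by
        rw [smul_inv_smul₀ (norm_ne_zero_iff.2 hx0)]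
        simpa using enorm_add_le (v (a • ω)) (v x - v (a • ω))
    _ ≤ _ := by
        gcongr
        · exact hvc _ (by simp [norm_smul, hω, abs_of_pos ha])
        refine (enorm_sub_le_of_weighted_ray (dim E - 1) hv hω.le ha.le hax.le).trans ?_
        gcongr
        exact setLIntegral_Ioc_le_rayLIntegral_indicator hΩ hΩT hx ha.le _

end Ray

section Poincare

variable {E F : Type*} [NormedAddCommGroup E] [NormedSpace ℝ E] [FiniteDimensional ℝ E]
  [Nontrivial E] [MeasurableSpace E] [BorelSpace E] (μ : Measure E) [μ.IsAddHaarMeasure]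
  [NormedAddCommGroup F] [NormedSpace ℝ F] [CompleteSpace F]

theorem eLpNorm_le_of_starConvex {Ω : Set E} (hΩ : StarConvex ℝ 0 Ω) {a b : ℝ} (ha : 0 < a)
    (hΩb : Ω ⊆ closedBall 0 b) {v : E → F} (hv : ContDiff ℝ 1 v) {c : ℝ}
    (hc : ∀ x ∈ closedBall (0 : E) a, ‖v x‖ ≤ c) :
    eLpNorm v 2 (μ.restrict Ω) ≤ eLpNorm (fun _ ↦ c) 2 (μ.restrict Ω) +
      ((∫⁻ s in Ioc a b, (ENNReal.ofReal (s ^ (dim E - 1)))⁻¹) *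
        ∫⁻ r in Icc a b, ENNReal.ofReal (r ^ (dim E - 1))) ^ (1 / 2 : ℝ) *
          eLpNorm (fderiv ℝ v) 2 (μ.restrict Ω) := by
  -- `Ω` need not be measurable; its measurable hull `T` carries the same restricted measure.
  set T := toMeasurable μ Ω
  set g : E → ℝ≥0∞ := T.indicator fun y ↦ ‖fderiv ℝ v y‖ₑ ^ (2 : ℝ)
  set Λ := ∫⁻ s in Ioc a b, (ENNReal.ofReal (s ^ (dim E - 1)))⁻¹
  set G : E → ℝ≥0∞ := fun x ↦ (Λ * (norm ⁻¹' Icc a b).indicator (rayLIntegral g) x) ^ (1 / 2 : ℝ)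
  have hg : Measurable g := by
    have := hv.continuous_fderiv one_ne_zero
    exact Measurable.indicator (by fun_prop) (measurableSet_toMeasurable μ Ω)
  have hG : Measurable G :=
    (measurable_const.mul ((measurable_rayLIntegral hg).indicator
      (measurable_norm measurableSet_Icc))).pow_const _
  have hbound : ∀ᵐ x ∂μ.restrict Ω, ‖v x‖ₑ ≤ ‖‖c‖ₑ + G x‖ₑ := by
    refine (ae_restrict_iff (measurableSet_le hv.continuous.enorm.measurable (by fun_prop))).2
      (ae_of_all _ fun x hx ↦ ?_)
    exact enorm_le_of_starConvex hΩ (subset_toMeasurable μ Ω) ha hΩb hv hc hx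
  calc eLpNorm v 2 (μ.restrict Ω)
      ≤ eLpNorm ((fun _ ↦ ‖c‖ₑ) + G) 2 (μ.restrict Ω) := eLpNorm_mono_enorm_ae hbound
    _ ≤ eLpNorm (fun _ ↦ ‖c‖ₑ) 2 (μ.restrict Ω) + eLpNorm G 2 (μ.restrict Ω) :=
        eLpNorm_add_le (ε := ℝ≥0∞) aestronglyMeasurable_const hG.aestronglyMeasurable
          (by norm_num)
    _ ≤ eLpNorm (fun _ ↦ c) 2 (μ.restrict Ω) + eLpNorm G 2 μ :=
        add_le_add (eLpNorm_congr_enorm_ae (ae_of_all _ fun _ ↦ enorm_eq_self _)).le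
          (eLpNorm_mono_measure _ Measure.restrict_le_self)
    _ = _ := by
        rw [eLpNorm_rpow_mul_indicator_rayLIntegral μ Λ hg measurableSet_Icc
          fun r hr ↦ ha.trans_le hr.1, eLpNorm_two_eq_rpow_lintegral _ (fderiv ℝ v),
          lintegral_indicator (measurableSet_toMeasurable μ Ω),
          Measure.restrict_toMeasurable_of_sFinite]

end Poincare

theorem lintegral_Ioc_inv_sq {a b : ℝ} (ha : 0 < a) (hab : a ≤ b) :
    ∫⁻ s in Ioc a b, (ENNReal.ofReal (s ^ 2))⁻¹ = ENNReal.ofReal (a⁻¹ - b⁻¹) := by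
  have hpos : ∀ s ∈ uIcc a b, 0 < s := fun s hs ↦ ha.trans_le (uIcc_of_le hab ▸ hs).1
  have hcont : ContinuousOn (fun s : ℝ ↦ (s ^ 2)⁻¹) (uIcc a b) :=
    (continuousOn_pow 2).inv₀ fun s hs ↦ (pow_pos (hpos s hs) 2).ne'
  have hderiv : ∀ s ∈ uIcc a b, HasDerivAt (fun s : ℝ ↦ -s⁻¹) (s ^ 2)⁻¹ s := fun s hs ↦ by
    simpa using (hasDerivAt_inv (hpos s hs).ne').fun_neg
  rw [setLIntegral_congr_fun measurableSet_Ioc fun s hs ↦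
      (ENNReal.ofReal_inv_of_pos (pow_pos (ha.trans hs.1) 2)).symm,
    ← ofReal_integral_eq_lintegral_ofReal (hcont.intervalIntegrable.1)
      (ae_of_all _ fun s ↦ inv_nonneg.2 (sq_nonneg s)),
    ← intervalIntegral.integral_of_le hab,
    intervalIntegral.integral_eq_sub_of_hasDerivAt hderiv hcont.intervalIntegrable]
  ring_nf

theorem lintegral_Icc_sq {a b : ℝ} (hab : a ≤ b) :
    ∫⁻ r in Icc a b, ENNReal.ofReal (r ^ 2) = ENNReal.ofReal ((b ^ 3 - a ^ 3) / 3) := by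
  rw [← Measure.restrict_congr_set Ioc_ae_eq_Icc,
    ← ofReal_integral_eq_lintegral_ofReal ((continuous_pow 2).intervalIntegrable a b).1
      (ae_of_all _ fun r ↦ sq_nonneg r),
    ← intervalIntegral.integral_of_le hab, integral_pow]
  norm_num

theorem rpow_lintegral_Ioc_inv_sq_mul_lintegral_Icc_sq_le {a b : ℝ} (ha : 0 < a) :
    ((∫⁻ s in Ioc a b, (ENNReal.ofReal (s ^ 2))⁻¹) * ∫⁻ r in Icc a b, ENNReal.ofReal (r ^ 2)) ^
      (1 / 2 : ℝ) ≤ ENNReal.ofReal √((b - a) * (b ^ 3 - a ^ 3) / (3 * b * a)) := by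
  rcases lt_or_ge b a with hba | hab
  · simp [Ioc_eq_empty_of_le hba.le]
  have hinv : 0 ≤ a⁻¹ - b⁻¹ := sub_nonneg.2 (inv_anti₀ ha hab)
  have hcube : 0 ≤ (b ^ 3 - a ^ 3) / 3 := by
    have := pow_le_pow_left₀ ha.le hab 3
    linarith
  rw [lintegral_Ioc_inv_sq ha hab, lintegral_Icc_sq hab, ← ENNReal.ofReal_mul hinv,
    ENNReal.ofReal_rpow_of_nonneg (mul_nonneg hinv hcube) (by norm_num), ← Real.sqrt_eq_rpow]
  have hb : 0 < b := ha.trans_le hab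
  rw [show (a⁻¹ - b⁻¹) * ((b ^ 3 - a ^ 3) / 3) = (b - a) * (b ^ 3 - a ^ 3) / (3 * b * a) by
    field_simp]

theorem new_poincare_inequality_general (Ω : Set (EuclideanSpace ℝ (Fin 3)))
    (Rmin Rmax c : ℝ) (hRmin : 0 < Rmin)
    (hstar : StarConvex ℝ 0 Ω) (hbdd : Ω ⊆ Metric.closedBall 0 Rmax)
    (v : EuclideanSpace ℝ (Fin 3) → ℝ) (hv : ContDiff ℝ 1 v)
    (hc : ∀ x ∈ Metric.closedBall (0 : EuclideanSpace ℝ (Fin 3)) Rmin, |v x| ≤ c) :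
    Real.sqrt (∫ x in Ω, (v x) ^ 2)
      ≤ Real.sqrt ((Rmax - Rmin) * (Rmax ^ 3 - Rmin ^ 3) / (3 * Rmax * Rmin))
          * Real.sqrt (∫ x in Ω, ‖fderiv ℝ v x‖ ^ 2)
        + Real.sqrt (∫ x in Ω, c ^ 2) := by
  have hΩ : Bornology.IsBounded Ω := isBounded_closedBall.subset hbdd
  have hDv : Continuous (fderiv ℝ v) := hv.continuous_fderiv one_ne_zero
  have hDv_fin := eLpNorm_restrict_ne_top_of_isBounded volume hDv hΩ 2
  have hc_fin := eLpNorm_restrict_ne_top_of_isBounded volume (continuous_const (y := c)) hΩ 2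
  have hcore := eLpNorm_le_of_starConvex volume hstar hRmin hbdd hv hc
  simp only [finrank_euclideanSpace_fin, Nat.add_one_sub_one] at hcore
  have hle := hcore.trans (add_le_add le_rfl
    (mul_le_mul_left (rpow_lintegral_Ioc_inv_sq_mul_lintegral_Icc_sq_le hRmin) _))
  have hbound := ENNReal.toReal_mono (by finiteness) hle
  rw [ENNReal.toReal_add hc_fin (by finiteness), ENNReal.toReal_mul,
    ENNReal.toReal_ofReal (Real.sqrt_nonneg _)] at hbound
  rw [← sqrt_integral_norm_sq_eq_toReal_eLpNorm hv.continuous.aestronglyMeasurable,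
    ← sqrt_integral_norm_sq_eq_toReal_eLpNorm hDv.aestronglyMeasurable,
    ← sqrt_integral_norm_sq_eq_toReal_eLpNorm aestronglyMeasurable_const] at hbound
  simpa [add_comm] using hbound

theorem new_poincare_inequality (Ω : Set (EuclideanSpace ℝ (Fin 3)))
    (Rmin Rmax c : ℝ) (hRmin : 0 < Rmin) (hRR : Rmin ≤ Rmax)
    (hstar : StarConvex ℝ 0 Ω) (hbdd : Ω ⊆ Metric.closedBall 0 Rmax)
    (hball : Metric.closedBall 0 Rmin ⊆ Ω)
    (v : EuclideanSpace ℝ (Fin 3) → ℝ) (hv : ContDiff ℝ 1 v)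
    (hc : ∀ x ∈ Metric.closedBall (0 : EuclideanSpace ℝ (Fin 3)) Rmin, |v x| ≤ c) :
    Real.sqrt (∫ x in Ω, (v x) ^ 2)
      ≤ Real.sqrt ((Rmax - Rmin) * (Rmax ^ 3 - Rmin ^ 3) / (3 * Rmax * Rmin))
          * Real.sqrt (∫ x in Ω, ‖fderiv ℝ v x‖ ^ 2)
        + Real.sqrt (∫ x in Ω, c ^ 2) :=
  new_poincare_inequality_general Ω Rmin Rmax c hRmin hstar hbdd v hv hc
end

section
/- Let f : [R_a, r] → ℝ be C¹ with 0 < R_min ≤ R_a and r ≤ R_max. Then (f(r) - f(R_a))² ≤ ((R_max - R_min)/(R_max R_min)) · ∫_{R_a}^{r} f'(ξ)² ξ² dξ. -/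
/-!
Write `f r - f Ra = ∫ ξ⁻¹ * (ξ * f' ξ)` and apply the Cauchy–Schwarz inequality: the weight
contributes `∫ ξ⁻² = Ra⁻¹ - r⁻¹`, which is at most `Rmin⁻¹ - Rmax⁻¹ = (Rmax - Rmin) / (Rmax * Rmin)`.
-/

open MeasureTheory Set intervalIntegral

theorem intervalIntegral.sq_integral_mul_le {μ : Measure ℝ} {a b : ℝ} (hab : a ≤ b)
    {u v : ℝ → ℝ} (hu : IntervalIntegrable (fun x ↦ u x ^ 2) μ a b)
    (hv : IntervalIntegrable (fun x ↦ v x ^ 2) μ a b)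
    (huv : IntervalIntegrable (fun x ↦ u x * v x) μ a b) :
    (∫ x in a..b, u x * v x ∂μ) ^ 2 ≤ (∫ x in a..b, u x ^ 2 ∂μ) * ∫ x in a..b, v x ^ 2 ∂μ := by
  set A := ∫ x in a..b, u x ^ 2 ∂μ
  set B := ∫ x in a..b, u x * v x ∂μ
  set C := ∫ x in a..b, v x ^ 2 ∂μ
  have hquad : ∀ t : ℝ, 0 ≤ A * (t * t) + (-2 * B) * t + C := by
    intro t
    have hexpand : ∫ x in a..b, (t * u x - v x) ^ 2 ∂μ = A * (t * t) + (-2 * B) * t + C := by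
      have : ∀ x, (t * u x - v x) ^ 2 = t ^ 2 * u x ^ 2 - 2 * t * (u x * v x) + v x ^ 2 :=
        fun x ↦ by ring
      simp only [this]
      rw [integral_add ((hu.const_mul _).sub (huv.const_mul _)) hv,
        integral_sub (hu.const_mul _) (huv.const_mul _), integral_const_mul, integral_const_mul]
      ring
    exact hexpand ▸ integral_nonneg_of_forall hab fun x ↦ sq_nonneg _
  have := discrim_le_zero hquad
  rw [discrim] at this
  linarith

theorem integral_inv_sq {a b : ℝ} (ha : 0 < a) (hab : a ≤ b) :
    ∫ x in a..b, (x ^ 2)⁻¹ = a⁻¹ - b⁻¹ := by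
  have hne : ∀ x ∈ uIcc a b, x ≠ 0 := fun x hx ↦
    (ha.trans_le (uIcc_of_le hab ▸ hx).1).ne'
  have hderiv : ∀ x ∈ uIcc a b, HasDerivAt (fun x ↦ -x⁻¹) ((x ^ 2)⁻¹) x := fun x hx ↦ by
    simpa using (hasDerivAt_inv (hne x hx)).fun_neg
  rw [integral_eq_sub_of_hasDerivAt hderiv]
  · ring
  · exact (continuousOn_id.pow 2).inv₀ (fun x hx ↦ pow_ne_zero 2 (hne x hx)) |>.intervalIntegrable

theorem sq_integral_le_inv_sub_inv_mul_integral_sq_mul_sq {a b : ℝ} (ha : 0 < a) (hab : a ≤ b)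
    {g : ℝ → ℝ} (hg : ContinuousOn g (Icc a b)) :
    (∫ x in a..b, g x) ^ 2 ≤ (a⁻¹ - b⁻¹) * ∫ x in a..b, g x ^ 2 * x ^ 2 := by
  rw [← uIcc_of_le hab] at hg
  have hne : ∀ x ∈ uIcc a b, x ≠ 0 := fun x hx ↦
    (ha.trans_le (uIcc_of_le hab ▸ hx).1).ne'
  have hinv : ContinuousOn (fun x : ℝ ↦ x⁻¹) (uIcc a b) := continuousOn_inv₀.mono hne
  have hfactor : ∫ x in a..b, g x = ∫ x in a..b, x⁻¹ * (x * g x) :=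
    integral_congr fun x hx ↦ by field_simp [hne x hx]
  have hweight : ∫ x in a..b, x⁻¹ ^ 2 = a⁻¹ - b⁻¹ := by
    simpa only [inv_pow] using integral_inv_sq ha hab
  have hweighted : ∫ x in a..b, (x * g x) ^ 2 = ∫ x in a..b, g x ^ 2 * x ^ 2 := by
    simp only [mul_pow, mul_comm]
  rw [hfactor, ← hweight, ← hweighted]
  exact sq_integral_mul_le hab (hinv.pow 2).intervalIntegrable
    ((continuousOn_id.mul hg).pow 2).intervalIntegrable
    (hinv.mul (continuousOn_id.mul hg)).intervalIntegrable

theorem radial_poincare_estimate (f : ℝ → ℝ) (Rmin Rmax Ra r : ℝ)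
    (h1 : 0 < Rmin) (h2 : Rmin ≤ Ra) (h3 : Ra ≤ r) (h4 : r ≤ Rmax)
    (hf : ContDiffOn ℝ 1 f (Set.Icc Ra r)) :
    (f r - f Ra) ^ 2
      ≤ (Rmax - Rmin) / (Rmax * Rmin)
          * ∫ ξ in Ra..r, (derivWithin f (Set.Icc Ra r) ξ) ^ 2 * ξ ^ 2 := by
  rcases h3.eq_or_lt with rfl | hlt
  · simp
  have hRa : 0 < Ra := h1.trans_le h2
  have hweight : Ra⁻¹ - r⁻¹ ≤ (Rmax - Rmin) / (Rmax * Rmin) := by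
    have hRmax : Rmax ≠ 0 := (hRa.trans_le (h3.trans h4)).ne'
    rw [show (Rmax - Rmin) / (Rmax * Rmin) = Rmin⁻¹ - Rmax⁻¹ by field_simp]
    linarith [inv_anti₀ h1 h2, inv_anti₀ (hRa.trans hlt) h4]
  have hcont : ContinuousOn (derivWithin f (Icc Ra r)) (Icc Ra r) :=
    hf.continuousOn_derivWithin (uniqueDiffOn_Icc hlt) le_rfl
  calc (f r - f Ra) ^ 2 = (∫ ξ in Ra..r, derivWithin f (Icc Ra r) ξ) ^ 2 := by
        rw [integral_derivWithin_Icc_of_contDiffOn_Icc hf h3]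
    _ ≤ (Ra⁻¹ - r⁻¹) * ∫ ξ in Ra..r, derivWithin f (Icc Ra r) ξ ^ 2 * ξ ^ 2 :=
        sq_integral_le_inv_sub_inv_mul_integral_sq_mul_sq hRa h3 hcont
    _ ≤ _ := by
        gcongr
        exact integral_nonneg_of_forall h3 fun ξ ↦ by positivity
end
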